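/- Let f be a real polynomial of degree n with only real roots, and let λ_j be a root of f of multiplicity r_j. Then λ_j lies in the interval [x_{n-1} − sqrt((n/r_j − 1)(n−1)) |x_{n-1} − x_{n-2}|, x_{n-1} + sqrt((n/r_j − 1)(n−1)) |x_{n-1} − x_{n-2}|], where x_{n-1} is the root of f^{(n-1)} and x_{n-2} a root of f^{(n-2)}. -/

import Mathlib

/-!
The root `x_{n-1}` of `f^{(n-1)}` is the mean `μ` of the roots of `f`, and comparing the
coefficients of the quadratic `f^{(n-2)}` with Newton's identity `(∑ λ)² = ∑ λ² + 2 e₂` gives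
`∑ (λ_i - μ)² = n (n - 1) (x_{n-1} - x_{n-2})²`. For a root `λ_j` of multiplicity `r`, the other
`n - r` roots deviate from `μ` by `-r (λ_j - μ)` in total, so Cauchy–Schwarz over them yields
`r n (λ_j - μ)² ≤ (n - r) ∑ (λ_i - μ)²`, which is the claim.
-/

open Polynomial
open scoped Nat

namespace Multiset

variable {R : Type*}

theorem esymm_one [CommSemiring R] (s : Multiset R) : s.esymm 1 = s.sum := by
  simp [esymm, powersetCard_one, map_map]

theorem sq_sum_eq_sum_map_sq_add_two_mul_esymm_two [CommRing R] (s : Multiset R) :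
    s.sum ^ 2 = (s.map (· ^ 2)).sum + 2 * s.esymm 2 := by
  induction s using Multiset.induction with
  | empty => simp [esymm, powersetCard_zero_right]
  | cons a s ih =>
    have esymm_two_cons : (a ::ₘ s).esymm 2 = a * s.sum + s.esymm 2 := by
      simp only [esymm, powersetCard_cons, Nat.reduceAdd, powersetCard_one, map_map,
        Function.comp_apply, map_add, prod_cons, prod_singleton, add_comm, sum_add, add_left_inj]
      rw [sum_map_mul_left, map_id']
    rw [sum_cons, map_cons, sum_cons, esymm_two_cons]
    linear_combination ih

theorem sum_map_sub_sq [CommRing R] (s : Multiset R) (c : R) :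
    (s.map fun y => (y - c) ^ 2).sum
      = (s.map (· ^ 2)).sum - 2 * c * s.sum + card s * c ^ 2 := by
  induction s using Multiset.induction with
  | empty => simp
  | cons a s ih =>
    simp only [map_cons, sum_cons, card_cons, ih]
    push_cast
    ring

section Ordered

variable [CommRing R] [LinearOrder R] [IsStrictOrderedRing R]

theorem sq_sum_le_card_mul_sum_map_sq (s : Multiset R) :
    s.sum ^ 2 ≤ card s * (s.map (· ^ 2)).sum := by
  classical
  have hsq : (s.map (· ^ 2)).sum = ∑ x : s, (x : R) ^ 2 := by
    conv_lhs => rw [← map_univ_coe s]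
    rw [map_map, Finset.sum_eq_multiset_sum]
    rfl
  rw [sum_eq_sum_coe, hsq, ← card_coe, ← Finset.card_univ]
  exact sq_sum_le_card_mul_sum_sq

theorem mul_card_mul_sq_sub_le_of_replicate_le {s : Multiset R} {x μ : R} {r : ℕ}
    (hr : replicate r x ≤ s) (hμ : s.sum = card s * μ) :
    r * card s * (x - μ) ^ 2 ≤ (card s - r) * (s.map fun y => (y - μ) ^ 2).sum := by
  obtain ⟨t, rfl⟩ := le_iff_exists_add.mp hr
  have hdev : (t.map (· - μ)).sum = -(r * (x - μ)) := by
    simp only [sum_add, sum_replicate, card_add, card_replicate, nsmul_eq_mul,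
      Nat.cast_add] at hμ
    rw [sum_map_sub, map_const', sum_replicate, nsmul_eq_mul, map_id']
    linear_combination hμ
  have hcs := sq_sum_le_card_mul_sum_map_sq (t.map (· - μ))
  simp only [hdev, map_map, Function.comp_def, card_map] at hcs
  simp only [map_add, sum_add, map_replicate, sum_replicate, card_add, card_replicate,
    nsmul_eq_mul, Nat.cast_add]
  linear_combination hcs

end Ordered

end Multiset

namespace Polynomial

section CommRing

variable {R : Type*} [CommRing R] {f : R[X]} {k : ℕ}

theorem eval_iterate_derivative_of_natDegree_le_add_one (hf : f.natDegree ≤ k + 1) (x : R) :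
    (derivative^[k] f).eval x = k ! * ((k + 1) * f.coeff (k + 1) * x + f.coeff k) := by
  have hdeg : (derivative^[k] f).natDegree < 2 := by
    have := natDegree_iterate_derivative f k
    omega
  have hdesc : (k + 1).descFactorial k = (k + 1) * k ! := by
    simpa [Nat.factorial_succ] using Nat.factorial_mul_descFactorial (Nat.le_succ k)
  rw [eval_eq_sum_range' hdeg]
  simp only [Finset.sum_range_succ, Finset.sum_range_zero, coeff_iterate_derivative, zero_add,
    Nat.descFactorial_self, nsmul_eq_mul, add_comm 1 k, hdesc]
  push_cast
  ring

theorem two_mul_eval_iterate_derivative_of_natDegree_le_add_two (hf : f.natDegree ≤ k + 2)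
    (x : R) :
    2 * (derivative^[k] f).eval x = k ! * ((k + 2) * (k + 1) * f.coeff (k + 2) * x ^ 2
      + 2 * (k + 1) * f.coeff (k + 1) * x + 2 * f.coeff k) := by
  have hdeg : (derivative^[k] f).natDegree < 3 := by
    have := natDegree_iterate_derivative f k
    omega
  have hdesc₁ : (k + 1).descFactorial k = (k + 1) * k ! := by
    simpa [Nat.factorial_succ] using Nat.factorial_mul_descFactorial (Nat.le_succ k)
  have hdesc₂ : 2 * (k + 2).descFactorial k = (k + 2) * (k + 1) * k ! := by
    have := Nat.factorial_mul_descFactorial (Nat.le_add_right k 2)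
    simp only [add_tsub_cancel_left, Nat.factorial_succ, Nat.reduceAdd, zero_add,
      Nat.factorial_zero, mul_one] at this
    linarith
  rw [eval_eq_sum_range' hdeg]
  simp only [Finset.sum_range_succ, Finset.sum_range_zero, coeff_iterate_derivative, zero_add,
    Nat.descFactorial_self, nsmul_eq_mul, add_comm 1 k, add_comm 2 k, hdesc₁]
  have hdesc₂' := congrArg (Nat.cast : ℕ → R) hdesc₂
  push_cast at hdesc₂' ⊢
  linear_combination f.coeff (k + 2) * x ^ 2 * hdesc₂'

end CommRing

section IsDomain

variable {R : Type*} [CommRing R] [IsDomain R] {f : R[X]} {k : ℕ}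

theorem coeff_eq_neg_leadingCoeff_mul_sum_roots (hroots : Multiset.card f.roots = f.natDegree)
    (hf : f.natDegree = k + 1) : f.coeff k = -(f.leadingCoeff * f.roots.sum) := by
  rw [coeff_eq_esymm_roots_of_card hroots (by omega), hf, Nat.add_sub_cancel_left,
    Multiset.esymm_one]
  ring

theorem coeff_eq_leadingCoeff_mul_esymm_two_roots (hroots : Multiset.card f.roots = f.natDegree)
    (hf : f.natDegree = k + 2) : f.coeff k = f.leadingCoeff * f.roots.esymm 2 := by
  rw [coeff_eq_esymm_roots_of_card hroots (by omega), hf, Nat.add_sub_cancel_left]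
  ring

variable [CharZero R]

theorem sum_roots_eq_of_eval_iterate_derivative_eq_zero
    (hroots : Multiset.card f.roots = f.natDegree) (hf : f.natDegree = k + 1) {x : R}
    (hx : (derivative^[k] f).eval x = 0) : f.roots.sum = (k + 1) * x := by
  have ha : f.leadingCoeff ≠ 0 := leadingCoeff_ne_zero.mpr (by rintro rfl; simp at hf)
  rw [eval_iterate_derivative_of_natDegree_le_add_one hf.le,
    coeff_eq_neg_leadingCoeff_mul_sum_roots hroots hf, ← hf, coeff_natDegree] at hx
  have hlin : f.leadingCoeff * ((k + 1) * x - f.roots.sum) = 0 := by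
    linear_combination (mul_eq_zero.mp hx).resolve_left (Nat.cast_ne_zero.mpr k.factorial_ne_zero)
  linear_combination -(mul_eq_zero.mp hlin).resolve_left ha

theorem sum_map_sub_sq_roots_eq_of_eval_iterate_derivative_eq_zero
    (hroots : Multiset.card f.roots = f.natDegree) (hf : f.natDegree = k + 2) {x₁ x₂ : R}
    (hx₁ : (derivative^[k + 1] f).eval x₁ = 0) (hx₂ : (derivative^[k] f).eval x₂ = 0) :
    (f.roots.map fun y => (y - x₁) ^ 2).sum = (k + 2) * (k + 1) * (x₁ - x₂) ^ 2 := by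
  have ha : f.leadingCoeff ≠ 0 := leadingCoeff_ne_zero.mpr (by rintro rfl; simp at hf)
  have hmean := sum_roots_eq_of_eval_iterate_derivative_eq_zero hroots hf hx₁
  push_cast at hmean
  have hquad := two_mul_eval_iterate_derivative_of_natDegree_le_add_two hf.le x₂
  rw [hx₂, mul_zero, coeff_eq_neg_leadingCoeff_mul_sum_roots hroots hf,
    coeff_eq_leadingCoeff_mul_esymm_two_roots hroots hf, ← hf, coeff_natDegree] at hquad
  have hquad' : f.leadingCoeff * ((k + 2) * (k + 1) * x₂ ^ 2 - 2 * (k + 1) * f.roots.sum * x₂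
      + 2 * f.roots.esymm 2) = 0 := by
    linear_combination
      (mul_eq_zero.mp hquad.symm).resolve_left (Nat.cast_ne_zero.mpr k.factorial_ne_zero)
  rw [Multiset.sum_map_sub_sq, hroots, hf]
  push_cast
  linear_combination -(Multiset.sq_sum_eq_sum_map_sq_add_two_mul_esymm_two f.roots)
    - (mul_eq_zero.mp hquad').resolve_left ha
    + (f.roots.sum + (k + 2) * x₁ - 2 * x₁ - 2 * (k + 1) * x₂) * hmean

end IsDomain

end Polynomial

theorem Real.abs_le_sqrt_mul_abs {t d C : ℝ} (h : t ^ 2 ≤ C * d ^ 2) : |t| ≤ √C * |d| := by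
  rw [← Real.sqrt_sq_eq_abs d, ← Real.sqrt_mul' C (sq_nonneg d)]
  exact Real.abs_le_sqrt h

theorem stmt_10_general (n rj : ℕ) (hn : 2 ≤ n) (f : ℝ[X]) (hdeg : f.natDegree = n)
    (hreal : f.roots.card = n) (lj : ℝ)
    (hmult : f.rootMultiplicity lj = rj) (hrj : 1 ≤ rj)
    (xn1 : ℝ) (hxn1 : (derivative^[n - 1] f).eval xn1 = 0)
    (xn2 : ℝ) (hxn2 : (derivative^[n - 2] f).eval xn2 = 0) :
    lj ∈ Set.Icc
      (xn1 - Real.sqrt (((n : ℝ) / rj - 1) * ((n : ℝ) - 1)) * |xn1 - xn2|)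
      (xn1 + Real.sqrt (((n : ℝ) / rj - 1) * ((n : ℝ) - 1)) * |xn1 - xn2|) := by
  obtain ⟨k, rfl⟩ : ∃ k, n = k + 2 := ⟨n - 2, by omega⟩
  have hroots : f.roots.card = f.natDegree := hreal.trans hdeg.symm
  have hmean : f.roots.sum = f.roots.card * xn1 := by
    rw [sum_roots_eq_of_eval_iterate_derivative_eq_zero hroots hdeg hxn1, hreal]
    push_cast
    ring
  have hrep : Multiset.replicate rj lj ≤ f.roots :=
    Multiset.le_count_iff_replicate_le.mp (by rw [count_roots, hmult])
  have key := Multiset.mul_card_mul_sq_sub_le_of_replicate_le hrep hmean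
  rw [sum_map_sub_sq_roots_eq_of_eval_iterate_derivative_eq_zero hroots hdeg hxn1 hxn2,
    hreal] at key
  have hr : (0 : ℝ) < rj := by exact_mod_cast hrj
  rw [← Set.mem_Icc_iff_abs_le, abs_sub_comm]
  apply Real.abs_le_sqrt_mul_abs
  rw [div_sub_one hr.ne', div_mul_eq_mul_div, div_mul_eq_mul_div, le_div_iff₀ hr]
  refine le_of_mul_le_mul_left ?_ (by positivity : (0 : ℝ) < k + 2)
  push_cast at key ⊢
  linear_combination key

theorem stmt_10 (n rj : ℕ) (hn : 2 ≤ n) (f : ℝ[X]) (hdeg : f.natDegree = n)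
    (hreal : f.roots.card = n) (lj : ℝ) (hroot : f.eval lj = 0)
    (hmult : f.rootMultiplicity lj = rj) (hrj : 1 ≤ rj)
    (xn1 : ℝ) (hxn1 : (derivative^[n - 1] f).eval xn1 = 0)
    (xn2 : ℝ) (hxn2 : (derivative^[n - 2] f).eval xn2 = 0) :
    lj ∈ Set.Icc
      (xn1 - Real.sqrt (((n : ℝ) / rj - 1) * ((n : ℝ) - 1)) * |xn1 - xn2|)
      (xn1 + Real.sqrt (((n : ℝ) / rj - 1) * ((n : ℝ) - 1)) * |xn1 - xn2|) :=
  stmt_10_general n rj hn f hdeg hreal lj hmult hrj xn1 hxn1 xn2 hxn2
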